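/- For every measurable A ⊆ X, the set A≀ := ⋃_{m≥0} T⁻ᵐ(T̂ᵐA) satisfies: (i) A≀ is a tail set with A ⊆̇ A≀, and every tail set Z with A ⊆̇ Z satisfies A≀ ⊆̇ Z (A≀ is the tail-measurable hull of A); (ii) X \ A≀ remains separated from A, and every measurable B that remains separated from A satisfies B ⊆̇ X \ A≀; (iii) for measurable A, B ⊆ X: A and B remain separated if and only if λ(A≀ ∩ B≀) = 0. -/
import Mathlib


open MeasureTheory Set

/-- `A` is a tail set for `T`: for every `n` there is a measurable `Aₙ` with `A =̇ T⁻ⁿAₙ`. -/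
def IsTailSet {X : Type*} [MeasurableSpace X] (lam : MeasureTheory.Measure X)
    (T : X → X) (A : Set X) : Prop :=
  ∀ n : ℕ, ∃ An : Set X, MeasurableSet An ∧ lam (symmDiff A (T^[n] ⁻¹' An)) = 0

/-- `A` and `B` remain separated under `T`: for every `n` there is a measurable `Aₙ` with
`A ⊆̇ T⁻ⁿAₙ` and `B ⊆̇ (T⁻ⁿAₙ)ᶜ`. -/
def RemainSeparated {X : Type*} [MeasurableSpace X] (lam : MeasureTheory.Measure X)
    (T : X → X) (A B : Set X) : Prop :=
  ∀ n : ℕ, ∃ An : Set X, MeasurableSet An ∧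
    lam (A \ T^[n] ⁻¹' An) = 0 ∧ lam (B \ (T^[n] ⁻¹' An)ᶜ) = 0

/-- The candidate tail-measurable hull `A≀ = ⋃_{m≥0} T⁻ᵐ(T̂ᵐA)`. -/
def tailHull {X : Type*} (hatT : Set X → Set X) (T : X → X) (A : Set X) : Set X :=
  ⋃ m : ℕ, T^[m] ⁻¹' (hatT^[m] A)

set_option linter.unusedSectionVars false

section Helpers
variable {X : Type*} [MeasurableSpace X] {lam : Measure X}

lemma sd_left {s t : Set X} (h : lam (symmDiff s t) = 0) : lam (s \ t) = 0 :=
  measure_mono_null (by rw [Set.symmDiff_def]; exact subset_union_left) h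

lemma sd_right {s t : Set X} (h : lam (symmDiff s t) = 0) : lam (t \ s) = 0 :=
  measure_mono_null (by rw [Set.symmDiff_def]; exact subset_union_right) h

lemma dnt {A B C : Set X} (h1 : lam (A \ B) = 0) (h2 : lam (B \ C) = 0) :
    lam (A \ C) = 0 :=
  measure_mono_null
    (fun x hx => by by_cases hb : x ∈ B
                    exacts [Or.inr ⟨hb, hx.2⟩, Or.inl ⟨hx.1, hb⟩])
    (measure_union_null h1 h2)

lemma preim_null {T : X → X} (hT : Measurable T) (hnp : lam.map T ≪ lam) {C : Set X}
    (hC : lam C = 0) : lam (T ⁻¹' C) = 0 := by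
  have h1 : lam (toMeasurable lam C) = 0 := by rwa [measure_toMeasurable]
  have h2 : lam.map T (toMeasurable lam C) = 0 := hnp h1
  rw [Measure.map_apply hT (measurableSet_toMeasurable lam C)] at h2
  exact measure_mono_null (preimage_mono (subset_toMeasurable lam C)) h2

lemma preim_iter_null {T : X → X} (hT : Measurable T) (hnp : lam.map T ≪ lam) (n : ℕ)
    {C : Set X} (hC : lam C = 0) : lam (T^[n] ⁻¹' C) = 0 := by
  induction n with
  | zero => simpa
  | succ n ih =>
    rw [Function.iterate_succ, preimage_comp]
    exact preim_null hT hnp ih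

end Helpers

section Hat
variable {X : Type*} [MeasurableSpace X] {lam : Measure X} {T : X → X} {hatT : Set X → Set X}
variable (hT : Measurable T) (hnp : lam.map T ≪ lam)
variable (hm : ∀ A : Set X, MeasurableSet A → MeasurableSet (hatT A))
variable (hchar : ∀ A : Set X, MeasurableSet A → ∀ C : Set X, MeasurableSet C →
      (0 < lam (hatT A ∩ C) ↔ 0 < lam (A ∩ T ⁻¹' C)))

include hchar hm in
lemma subset_preimage_hat {A : Set X} (hA : MeasurableSet A) :
    lam (A \ T ⁻¹' (hatT A)) = 0 := by
  have h2 : ¬ 0 < lam (A ∩ T ⁻¹' (hatT A)ᶜ) := by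
    intro hp
    have := (hchar A hA (hatT A)ᶜ (hm A hA).compl).mpr hp
    simp [inter_compl_self] at this
  rw [not_lt] at h2
  have h3 := le_zero_iff.mp h2
  simpa [diff_eq, preimage_compl] using h3

include hchar in
lemma hat_subset {A C : Set X} (hA : MeasurableSet A) (hC : MeasurableSet C)
    (h : lam (A \ T ⁻¹' C) = 0) : lam (hatT A \ C) = 0 := by
  have h2 : ¬ 0 < lam (hatT A ∩ Cᶜ) := by
    intro hp
    have := (hchar A hA Cᶜ hC.compl).mp hp
    rw [pos_iff_ne_zero] at this
    exact this (by simpa [diff_eq, preimage_compl] using h)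
  rw [not_lt] at h2
  simpa [diff_eq] using le_zero_iff.mp h2

include hm in
lemma hat_iter_meas {A : Set X} (hA : MeasurableSet A) (n : ℕ) :
    MeasurableSet (hatT^[n] A) := by
  induction n with
  | zero => simpa
  | succ n ih => rw [Function.iterate_succ_apply']; exact hm _ ih

include hT hnp hm hchar in
lemma hull_step {A : Set X} (hA : MeasurableSet A) (n : ℕ) :
    lam (T^[n] ⁻¹' (hatT^[n] A) \ T^[n+1] ⁻¹' (hatT^[n+1] A)) = 0 := by
  rw [Function.iterate_succ' T, preimage_comp, Function.iterate_succ_apply' hatT,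
    ← preimage_diff]
  exact preim_iter_null hT hnp n (subset_preimage_hat hm hchar (hat_iter_meas hm hA n))

include hT hnp hm hchar in
lemma hull_chain {A : Set X} (hA : MeasurableSet A) (k n : ℕ) (h : k ≤ n) :
    lam (T^[k] ⁻¹' (hatT^[k] A) \ T^[n] ⁻¹' (hatT^[n] A)) = 0 := by
  induction n, h using Nat.le_induction with
  | base => simp
  | succ n hkn ih => exact dnt ih (hull_step hT hnp hm hchar hA n)

include hT hnp hm hchar in
lemma subset_hull_n {A : Set X} (hA : MeasurableSet A) (n : ℕ) :
    lam (A \ T^[n] ⁻¹' (hatT^[n] A)) = 0 := by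
  have := hull_chain hT hnp hm hchar hA 0 n (Nat.zero_le n)
  simpa using this

include hT hm hchar in
lemma hat_iter_subset {A : Set X} (hA : MeasurableSet A) :
    ∀ n : ℕ, ∀ C : Set X, MeasurableSet C → lam (A \ T^[n] ⁻¹' C) = 0 →
      lam (hatT^[n] A \ C) = 0 := by
  intro n
  induction n with
  | zero => intro C _ h; simpa using h
  | succ n ih =>
    intro C hC h
    rw [Function.iterate_succ' T, preimage_comp] at h
    have h1 := ih (T ⁻¹' C) (hT hC) h
    rw [Function.iterate_succ_apply' hatT]
    exact hat_subset hchar (hat_iter_meas hm hA n) hC h1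

include hT hm in
lemma hull_meas {A : Set X} (hA : MeasurableSet A) :
    MeasurableSet (tailHull hatT T A) :=
  MeasurableSet.iUnion fun m => (hat_iter_meas hm hA m).preimage (hT.iterate m)

lemma preim_hull_eq (A : Set X) (n : ℕ) :
    T^[n] ⁻¹' (tailHull hatT T (hatT^[n] A)) = ⋃ m, T^[m+n] ⁻¹' (hatT^[m+n] A) := by
  rw [tailHull, preimage_iUnion]
  refine iUnion_congr fun m => ?_
  rw [← Function.iterate_add_apply, ← preimage_comp, ← Function.iterate_add]

include hT hnp hm hchar in
lemma hull_tail_null {A : Set X} (hA : MeasurableSet A) (n : ℕ) :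
    lam (symmDiff (tailHull hatT T A) (T^[n] ⁻¹' (tailHull hatT T (hatT^[n] A)))) = 0 := by
  rw [preim_hull_eq, Set.symmDiff_def]
  apply measure_union_null
  · apply measure_mono_null (t := ⋃ m, (T^[m] ⁻¹' (hatT^[m] A) \ T^[m+n] ⁻¹' (hatT^[m+n] A)))
    · rintro x ⟨hx1, hx2⟩
      rw [tailHull, mem_iUnion] at hx1
      obtain ⟨m, hm'⟩ := hx1
      rw [mem_iUnion] at hx2 ⊢
      exact ⟨m, hm', fun hc => hx2 ⟨m, hc⟩⟩
    · exact measure_iUnion_null fun m =>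
        hull_chain hT hnp hm hchar hA m (m + n) (Nat.le_add_right m n)
  · have hsub : (⋃ m, T^[m+n] ⁻¹' (hatT^[m+n] A)) ⊆ tailHull hatT T A := by
      rintro x hx
      rw [mem_iUnion] at hx
      obtain ⟨m, hm'⟩ := hx
      exact mem_iUnion.mpr ⟨m + n, hm'⟩
    rw [diff_eq_empty.mpr hsub]
    simp

end Hat

/-- (i) `A≀` is the tail-measurable hull of `A`; (ii) `(A≀)ᶜ` is the
largest set remaining separated from `A`; (iii) `A` and `B` remain separated iff
`λ(A≀ ∩ B≀) = 0`. -/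
theorem stmt_17 {X : Type*} [MeasurableSpace X]
    (lam : Measure X) [SigmaFinite lam]
    (T : X → X) (hT : Measurable T) (hnp : lam.map T ≪ lam)
    (hatT : Set X → Set X)
    (hm : ∀ A : Set X, MeasurableSet A → MeasurableSet (hatT A))
    (hchar : ∀ A : Set X, MeasurableSet A → ∀ C : Set X, MeasurableSet C →
      (0 < lam (hatT A ∩ C) ↔ 0 < lam (A ∩ T ⁻¹' C)))
    (A B : Set X) (hA : MeasurableSet A) (hB : MeasurableSet B) :
    (IsTailSet lam T (tailHull hatT T A) ∧ lam (A \ tailHull hatT T A) = 0 ∧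
      (∀ Z : Set X, MeasurableSet Z → IsTailSet lam T Z → lam (A \ Z) = 0 →
        lam (tailHull hatT T A \ Z) = 0)) ∧
    (RemainSeparated lam T A (tailHull hatT T A)ᶜ ∧
      (∀ B₀ : Set X, MeasurableSet B₀ → RemainSeparated lam T A B₀ →
        lam (B₀ \ (tailHull hatT T A)ᶜ) = 0)) ∧
    (RemainSeparated lam T A B ↔
      lam (tailHull hatT T A ∩ tailHull hatT T B) = 0) := by
  have hsubhull : ∀ S : Set X, S ⊆ tailHull hatT T S :=
    fun S x hx => mem_iUnion.mpr ⟨0, by simpa using hx⟩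
  have hAnull : lam (A \ tailHull hatT T A) = 0 := by
    rw [diff_eq_empty.mpr (hsubhull A)]; simp
  refine ⟨⟨?_, hAnull, ?_⟩, ⟨?_, ?_⟩, ?_, ?_⟩
  · -- tail set
    intro n
    exact ⟨tailHull hatT T (hatT^[n] A), hull_meas hT hm (hat_iter_meas hm hA n),
      hull_tail_null hT hnp hm hchar hA n⟩
  · -- minimality
    intro Z hZ hZt hAZ
    rw [tailHull, iUnion_diff]
    apply measure_iUnion_null
    intro n
    obtain ⟨Zn, hZn, hsd⟩ := hZt n
    have h1 : lam (A \ T^[n] ⁻¹' Zn) = 0 := dnt hAZ (sd_left hsd)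
    have h2 : lam (hatT^[n] A \ Zn) = 0 := hat_iter_subset hT hm hchar hA n Zn hZn h1
    have h3 : lam (T^[n] ⁻¹' (hatT^[n] A) \ T^[n] ⁻¹' Zn) = 0 := by
      rw [← preimage_diff]; exact preim_iter_null hT hnp n h2
    exact dnt h3 (sd_right hsd)
  · -- (A≀)ᶜ remains separated from A
    intro n
    refine ⟨hatT^[n] A, hat_iter_meas hm hA n, subset_hull_n hT hnp hm hchar hA n, ?_⟩
    have hE : (tailHull hatT T A)ᶜ \ (T^[n] ⁻¹' (hatT^[n] A))ᶜ = ∅ := by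
      rw [diff_eq_empty]
      exact compl_subset_compl.mpr fun x hx => mem_iUnion.mpr ⟨n, hx⟩
    rw [hE]; simp
  · -- maximality
    intro B₀ hB₀ hsep
    have hE : B₀ \ (tailHull hatT T A)ᶜ = ⋃ n, B₀ ∩ T^[n] ⁻¹' (hatT^[n] A) := by
      rw [diff_compl, tailHull, inter_iUnion]
    rw [hE]
    apply measure_iUnion_null
    intro n
    obtain ⟨An, hAn, h1, h2⟩ := hsep n
    have h3 : lam (hatT^[n] A \ An) = 0 := hat_iter_subset hT hm hchar hA n An hAn h1
    have h4 : lam (T^[n] ⁻¹' (hatT^[n] A) \ T^[n] ⁻¹' An) = 0 := by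
      rw [← preimage_diff]; exact preim_iter_null hT hnp n h3
    have h5 : lam (B₀ ∩ T^[n] ⁻¹' An) = 0 := by
      rw [← diff_compl]; exact h2
    refine measure_mono_null ?_ (measure_union_null h4 h5)
    rintro x ⟨hxB, hxP⟩
    by_cases hxA : x ∈ T^[n] ⁻¹' An
    · exact Or.inr ⟨hxB, hxA⟩
    · exact Or.inl ⟨hxP, hxA⟩
  · -- separated → null intersection of hulls
    intro hsep
    have key : ∀ k, lam (T^[k] ⁻¹' (hatT^[k] A) ∩ T^[k] ⁻¹' (hatT^[k] B)) = 0 := by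
      intro k
      obtain ⟨Ak, hAk, h1, h2⟩ := hsep k
      have hAsub : lam (hatT^[k] A \ Ak) = 0 := hat_iter_subset hT hm hchar hA k Ak hAk h1
      have h2' : lam (B \ T^[k] ⁻¹' Akᶜ) = 0 := by
        rw [preimage_compl]; exact h2
      have hBsub : lam (hatT^[k] B \ Akᶜ) = 0 :=
        hat_iter_subset hT hm hchar hB k Akᶜ hAk.compl h2'
      have hset : hatT^[k] A ∩ hatT^[k] B ⊆ (hatT^[k] A \ Ak) ∪ (hatT^[k] B \ Akᶜ) := by
        rintro x ⟨hx1, hx2⟩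
        by_cases hxA : x ∈ Ak
        · exact Or.inr ⟨hx2, by simpa using hxA⟩
        · exact Or.inl ⟨hx1, hxA⟩
      have h6 := measure_mono_null hset (measure_union_null hAsub hBsub)
      rw [← preimage_inter]
      exact preim_iter_null hT hnp k h6
    have gen : ∀ n m, lam (T^[n] ⁻¹' (hatT^[n] A) ∩ T^[m] ⁻¹' (hatT^[m] B)) = 0 := by
      intro n m
      have hch1 := hull_chain hT hnp hm hchar hA n (max n m) (le_max_left n m)
      have hch2 := hull_chain hT hnp hm hchar hB m (max n m) (le_max_right n m)
      refine measure_mono_null ?_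
        (measure_union_null (measure_union_null hch1 hch2) (key (max n m)))
      rintro x ⟨hx1, hx2⟩
      by_cases hk1 : x ∈ T^[max n m] ⁻¹' (hatT^[max n m] A)
      · by_cases hk2 : x ∈ T^[max n m] ⁻¹' (hatT^[max n m] B)
        · exact Or.inr ⟨hk1, hk2⟩
        · exact Or.inl (Or.inr ⟨hx2, hk2⟩)
      · exact Or.inl (Or.inl ⟨hx1, hk1⟩)
    refine measure_mono_null
      (t := ⋃ n, ⋃ m, T^[n] ⁻¹' (hatT^[n] A) ∩ T^[m] ⁻¹' (hatT^[m] B)) ?_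
      (measure_iUnion_null fun n => measure_iUnion_null fun m => gen n m)
    rintro x ⟨hx1, hx2⟩
    rw [tailHull, mem_iUnion] at hx1 hx2
    obtain ⟨n, hn⟩ := hx1
    obtain ⟨m2, hm2⟩ := hx2
    exact mem_iUnion.mpr ⟨n, mem_iUnion.mpr ⟨m2, hn, hm2⟩⟩
  · -- null intersection of hulls → separated
    intro h0 n
    refine ⟨tailHull hatT T (hatT^[n] A), hull_meas hT hm (hat_iter_meas hm hA n), ?_, ?_⟩
    · exact dnt hAnull (sd_left (hull_tail_null hT hnp hm hchar hA n))
    · rw [diff_compl]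
      have h1 : lam (T^[n] ⁻¹' (tailHull hatT T (hatT^[n] A)) \ tailHull hatT T A) = 0 :=
        sd_right (hull_tail_null hT hnp hm hchar hA n)
      refine measure_mono_null ?_ (measure_union_null h1 h0)
      rintro x ⟨hxB, hxS⟩
      by_cases hxH : x ∈ tailHull hatT T A
      · exact Or.inr ⟨hxH, hsubhull B hxB⟩
      · exact Or.inl ⟨hxS, hxH⟩
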